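/- Let A be an anti-commutative algebra over a field F. The set K of all CB-elements of A is a subalgebra of A: 0 ∈ K, and if z₁, z₂ ∈ K and c ∈ F then z₁ + z₂ ∈ K, c·z₁ ∈ K, and z₁·z₂ ∈ K. -/

import Mathlib

/-!
Closure under `0`, `+` and scalars is linearity. For products, polarizing `(x·z)·x = 0` shows
that `(a, b) ↦ (a·z)·b` is alternating when `z` is a CB-element, so with anti-commutativity
`x·(z₁·z₂) = (x·z₂)·z₁`; the CB property of `z₂` makes `(x·z₂)·y = 0` whenever `x·y = 0`, and then
that of `z₁` kills `((x·z₂)·z₁)·y`.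
-/

namespace LinearMap

def IsCBElement {R M : Type*} [CommSemiring R] [AddCommMonoid M] [Module R M]
    (B : M →ₗ[R] M →ₗ[R] M) (z : M) : Prop :=
  ∀ x y, B x y = 0 → B (B x z) y = 0

section AddCommMonoid

variable {R M : Type*} [CommSemiring R] [AddCommMonoid M] [Module R M] {B : M →ₗ[R] M →ₗ[R] M}

theorem isCBElement_zero : B.IsCBElement 0 := by
  intro x y _
  simp

theorem IsCBElement.add {z₁ z₂ : M} (h₁ : B.IsCBElement z₁) (h₂ : B.IsCBElement z₂) :
    B.IsCBElement (z₁ + z₂) := by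
  intro x y hxy
  simp [h₁ x y hxy, h₂ x y hxy]

theorem IsCBElement.smul {z : M} (h : B.IsCBElement z) (c : R) : B.IsCBElement (c • z) := by
  intro x y hxy
  simp [h x y hxy]

end AddCommMonoid

section AddCommGroup

variable {R M : Type*} [CommSemiring R] [AddCommGroup M] [Module R M] {B : M →ₗ[R] M →ₗ[R] M}

theorem IsCBElement.isAlt_comp_flip (hB : B.IsAlt) {z : M} (hz : B.IsCBElement z) :
    (B ∘ₗ B.flip z).IsAlt :=
  fun x ↦ hz x x (hB x)

theorem IsCBElement.mul_mul_eq (hB : B.IsAlt) (z₁ : M) {z₂ : M} (h₂ : B.IsCBElement z₂)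
    (x : M) : B x (B z₁ z₂) = B (B x z₂) z₁ := by
  rw [← hB.neg]
  exact (h₂.isAlt_comp_flip hB).neg z₁ x

theorem IsCBElement.mul (hB : B.IsAlt) {z₁ z₂ : M} (h₁ : B.IsCBElement z₁)
    (h₂ : B.IsCBElement z₂) : B.IsCBElement (B z₁ z₂) := by
  intro x y hxy
  rw [h₂.mul_mul_eq hB]
  exact h₁ _ y (h₂ x y hxy)

end AddCommGroup

end LinearMap

open LinearMap in
theorem stmt_7 (F : Type*) [Field F] (A : Type*) [AddCommGroup A] [Module F A]
    (mul : A →ₗ[F] A →ₗ[F] A)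
    (hac : ∀ x : A, mul x x = 0) :
    (∀ x y : A, mul x y = 0 → mul (mul x (0 : A)) y = 0) ∧
      (∀ z₁ z₂ : A, ∀ c : F,
        (∀ x y : A, mul x y = 0 → mul (mul x z₁) y = 0) →
        (∀ x y : A, mul x y = 0 → mul (mul x z₂) y = 0) →
        (∀ x y : A, mul x y = 0 → mul (mul x (z₁ + z₂)) y = 0) ∧
        (∀ x y : A, mul x y = 0 → mul (mul x (c • z₁)) y = 0) ∧
        (∀ x y : A, mul x y = 0 → mul (mul x (mul z₁ z₂)) y = 0)) :=
  ⟨isCBElement_zero, fun _ _ c h₁ h₂ ↦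
    ⟨IsCBElement.add h₁ h₂, IsCBElement.smul h₁ c, IsCBElement.mul hac h₁ h₂⟩⟩
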